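/- For every k >= 1 and every vertex v of the twincut graph G_k, there exists a proper k-coloring of G_k in which v is the unique vertex receiving color k. -/

import Mathlib

/-- A structured tree: a rooted tree together with, at each internal node,
a graph on its children. A `leaf` is a tree with a single (leaf) node; a
`node ι c g` has children indexed by `ι`, subtrees `c i`, and the graph `g`
on the children. -/
inductive STree : Type 1 where
  | leaf : STree
  | node : (ι : Type) → (ι → STree) → SimpleGraph ι → STree

namespace STree

/-- The type of nodes of a structured tree. -/
def NodeType : STree → Type
  | leaf => PUnit
  | node ι c _ => PUnit ⊕ Σ i : ι, NodeType (c i)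

/-- The type of branches (root-to-leaf paths) of a structured tree. -/
def Branch : STree → Type
  | leaf => PUnit
  | node _ c _ => Σ i, Branch (c i)

/-- The root of a structured tree, as a node. -/
def root : (t : STree) → t.NodeType
  | leaf => PUnit.unit
  | node _ _ _ => Sum.inl PUnit.unit

/-- `onBranch t b u` means that the node `u` lies on the branch `b`. -/
def onBranch : (t : STree) → t.Branch → t.NodeType → Prop
  | leaf, _, _ => True
  | node _ c _, ⟨i, b⟩, u =>
      match u with
      | Sum.inl _ => True
      | Sum.inr ⟨j, w⟩ => ∃ h : j = i, onBranch (c i) b (h ▸ w)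

/-- Adjacency between tree nodes in the realization: the union of the edges
of the graphs `g(v)` placed on the children of each internal node `v`
(tree edges are *not* included). -/
def treeAdj : (t : STree) → t.NodeType → t.NodeType → Prop
  | leaf, _, _ => False
  | node ι c g, u, v =>
      match u, v with
      | Sum.inr ⟨i, u'⟩, Sum.inr ⟨j, v'⟩ =>
          (∃ h : i = j, treeAdj (c j) (h ▸ u') v') ∨
          (g.Adj i j ∧ u' = root (c i) ∧ v' = root (c j))
      | _, _ => False

/-- The realization `R(T,g)` of a structured tree: its vertices are the tree
nodes together with the branches; edges are those of the graphs `g(v)`, plus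
an edge from each branch vertex to every tree node lying on that branch. -/
def realization (t : STree) : SimpleGraph (t.NodeType ⊕ t.Branch) :=
  SimpleGraph.fromRel (fun x y =>
    match x, y with
    | Sum.inl u, Sum.inl v => treeAdj t u v
    | Sum.inl u, Sum.inr b => onBranch t b u
    | Sum.inr b, Sum.inl u => onBranch t b u
    | Sum.inr _, Sum.inr _ => False)

/-- The level of a node (the root is at level 1). -/
def level : (t : STree) → t.NodeType → ℕ
  | leaf, _ => 1
  | node _ c _, u =>
      match u with
      | Sum.inl _ => 1
      | Sum.inr ⟨i, w⟩ => level (c i) w + 1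

/-- `IsInternalGraphOf t ⟨ι, g⟩` means that `g` is the graph attached to some
internal node of `t` (on its children, indexed by `ι`). -/
inductive IsInternalGraphOf : STree → (Σ ι : Type, SimpleGraph ι) → Prop where
  | here : ∀ (ι : Type) (c : ι → STree) (g : SimpleGraph ι),
      IsInternalGraphOf (node ι c g) ⟨ι, g⟩
  | child : ∀ (ι : Type) (c : ι → STree) (g : SimpleGraph ι) (i : ι) (p),
      IsInternalGraphOf (c i) p → IsInternalGraphOf (node ι c g) p

end STree

/-- Builds the structured tree in which all nodes at level `i` carry the
`i`-th graph of the list on their children (so the tree has `L.length + 1`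
levels). -/
def buildTree : List (Σ V : Type, SimpleGraph V) → STree
  | [] => .leaf
  | ⟨ι, g⟩ :: rest => .node ι (fun _ => buildTree rest) g

/-- The realization of a structured tree, packaged with its vertex type. -/
def realizationSigma (t : STree) : Σ V : Type, SimpleGraph V :=
  ⟨t.NodeType ⊕ t.Branch, t.realization⟩

/-- `twincutList m` is the list `[G₂, G₃, …, G_{m+1}]` of twincut graphs. -/
def twincutList : ℕ → List (Σ V : Type, SimpleGraph V)
  | 0 => []
  | m + 1 => twincutList m ++ [realizationSigma (buildTree (twincutList m))]

/-- The structured tree `T_{m+2}` whose realization is the twincut graph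
`G_{m+2}`: it has `m + 1` levels, and every node at level `i ≤ m` carries
the graph `G_{i+1}` on its children. -/
def twincutTree (m : ℕ) : STree := buildTree (twincutList m)

/-- The twincut graphs: `G 1` is the one-vertex graph, and for `k ≥ 2`,
`G k` is the realization of the structured tree `T_k`. -/
def twincutG : ℕ → Σ V : Type, SimpleGraph V
  | 0 => ⟨PUnit, ⊥⟩
  | 1 => ⟨PUnit, ⊥⟩
  | (m + 2) => realizationSigma (twincutTree m)


/-! Colour the tree nodes of `G_k` level by level: the children of a node at level `i` form a
copy of `G_{i+1}`, coloured properly with colours `0, …, i` so that one prescribed child is the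
only one with colour `i`. A node at level `j` then has a colour below `j`, so the `k - 1` nodes
of a branch use all of the colours `0, …, k - 2` only if the branch is a staircase, coloured
`0, 1, …, k - 2` from the root down. Prescribing the children along the root path towards the
target vertex `v` leaves staircases only through `v`; if `v` is a node it is itself coloured
`k - 1`, which breaks them. Every branch vertex other than `v` then takes a colour `≤ k - 2`
missing on its branch, and `v` is left as the only vertex of colour `k - 1`. -/

def IsUniqueTopColorable {V : Type} (G : SimpleGraph V) (t : ℕ) : Prop :=
  ∀ v, ∃ c : V → ℕ, (∀ a b, G.Adj a b → c a ≠ c b) ∧ c v = t ∧ ∀ u, u ≠ v → c u < t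

lemma IsUniqueTopColorable.exists_coloring {V : Type} {G : SimpleGraph V} {t : ℕ}
    (hG : IsUniqueTopColorable G t) (o : Option V) :
    ∃ c : V → ℕ, (∀ a b, G.Adj a b → c a ≠ c b) ∧ (∀ u, c u ≤ t) ∧
      ∀ v ∈ o, ∀ u, c u = t → u = v := by
  have key (v : V) : ∃ c : V → ℕ, (∀ a b, G.Adj a b → c a ≠ c b) ∧ (∀ u, c u ≤ t) ∧
      ∀ u, c u = t → u = v := by
    obtain ⟨c, hc, hv, hlt⟩ := hG v
    refine ⟨c, hc, fun u => ?_, fun u hu => by_contra fun h => (hlt u h).ne hu⟩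
    by_cases h : u = v
    · rw [h, hv]
    · exact (hlt u h).le
  cases o with
  | some v =>
    obtain ⟨c, hc, hle, htop⟩ := key v
    exact ⟨c, hc, hle, fun w hw => Option.some_injective _ hw ▸ htop⟩
  | none =>
    cases isEmpty_or_nonempty V with
    | inl _ => exact ⟨fun _ => 0, fun a => isEmptyElim a, fun _ => Nat.zero_le t, by simp⟩
    | inr h =>
      obtain ⟨c, hc, hle, -⟩ := key h.some
      exact ⟨c, hc, hle, by simp⟩

def UniqueTopColorableFrom (n : ℕ) (L : List (Σ V : Type, SimpleGraph V)) : Prop :=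
  ∀ j (hj : j < L.length), IsUniqueTopColorable L[j].2 (n + j + 1)

namespace UniqueTopColorableFrom

variable {n : ℕ} {G : Σ V : Type, SimpleGraph V} {L : List (Σ V : Type, SimpleGraph V)}

lemma head (h : UniqueTopColorableFrom n (G :: L)) : IsUniqueTopColorable G.2 (n + 1) :=
  h 0 (Nat.succ_pos _)

lemma tail (h : UniqueTopColorableFrom n (G :: L)) : UniqueTopColorableFrom (n + 1) L :=
  fun j hj => by
    have := h (j + 1) (Nat.succ_lt_succ hj)
    rwa [show n + (j + 1) + 1 = n + 1 + j + 1 by omega] at this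

end UniqueTopColorableFrom

namespace STree

lemma level_pos (t : STree) (u : t.NodeType) : 0 < t.level u := by
  cases t with
  | leaf => exact Nat.one_pos
  | node ι cs g =>
    rcases u with _ | ⟨i, u⟩
    · exact Nat.one_pos
    · exact Nat.succ_pos _

lemma level_root (t : STree) : t.level t.root = 1 := by
  cases t <;> rfl

lemma onBranch_root (t : STree) (b : t.Branch) : t.onBranch b t.root := by
  cases t <;> trivial

def IsProperColoring (t : STree) (c : t.NodeType → ℕ) : Prop :=
  ∀ u v, t.treeAdj u v → c u ≠ c v

def IsStaircase (t : STree) (c : t.NodeType → ℕ) (n : ℕ) (b : t.Branch) : Prop :=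
  ∀ u, t.onBranch b u → c u + 1 = n + t.level u

/-- `w = .inl t.root` stands for "no target": the colour of the root is left to the caller, and
a marked node strictly below the root gets the colour `T`. -/
structure IsMarkedColoring (t : STree) (n T : ℕ) (w : t.NodeType ⊕ t.Branch)
    (c : t.NodeType → ℕ) : Prop where
  isProper : IsProperColoring t c
  lt : ∀ u, u ≠ t.root → .inl u ≠ w → c u < n + t.level u
  eq_top : ∀ u, u ≠ t.root → .inl u = w → c u = T
  staircase : ∀ b, IsStaircase t c n b → .inr b = w ∨ w = .inl t.root

lemma ne_of_realization_adj {t : STree} {C : t.NodeType ⊕ t.Branch → ℕ}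
    (hnode : IsProperColoring t (C ∘ Sum.inl))
    (hbranch : ∀ b u, t.onBranch b u → C (.inl u) ≠ C (.inr b)) :
    ∀ a a', t.realization.Adj a a' → C a ≠ C a' := by
  intro a a' h
  rw [realization, SimpleGraph.fromRel_adj] at h
  rcases a with u | b <;> rcases a' with v | b' <;> obtain ⟨-, h | h⟩ := h
  exacts [hnode u v h, (hnode v u h).symm, hbranch b' u h, hbranch b' u h,
    (hbranch b v h).symm, (hbranch b v h).symm, h.elim, h.elim]

section Node

variable {ι : Type} {cs : ι → STree} {g : SimpleGraph ι}

def nodeColoring (r : ℕ) (f : ∀ i, (cs i).NodeType → ℕ) : (node ι cs g).NodeType → ℕ :=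
  Sum.elim (fun _ => r) fun x => f x.1 x.2

lemma isProperColoring_nodeColoring {r : ℕ} {f : ∀ i, (cs i).NodeType → ℕ}
    (hf : ∀ i, IsProperColoring (cs i) (f i))
    (hg : ∀ i j, g.Adj i j → f i (cs i).root ≠ f j (cs j).root) :
    IsProperColoring (node ι cs g) (nodeColoring r f) := by
  rintro (_ | ⟨i, u⟩) (_ | ⟨j, v⟩) h
  · exact h.elim
  · exact h.elim
  · exact h.elim
  · rcases h with ⟨rfl, h⟩ | ⟨hij, rfl, rfl⟩
    · exact hf i u v h
    · exact hg i j hij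

lemma isStaircase_node_iff (c : (node ι cs g).NodeType → ℕ) (n : ℕ) (i : ι)
    (b : (cs i).Branch) :
    IsStaircase (node ι cs g) c n ⟨i, b⟩ ↔
      c (node ι cs g).root = n ∧ IsStaircase (cs i) (fun u => c (.inr ⟨i, u⟩)) (n + 1) b := by
  constructor
  · intro h
    refine ⟨Nat.add_right_cancel (h (.inl PUnit.unit) trivial), fun u hu => ?_⟩
    have : c (.inr ⟨i, u⟩) + 1 = n + ((cs i).level u + 1) := h (.inr ⟨i, u⟩) ⟨rfl, hu⟩
    show c (.inr ⟨i, u⟩) + 1 = n + 1 + (cs i).level u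
    omega
  · rintro ⟨hr, h⟩ (_ | ⟨j, u⟩) hu
    · exact congrArg (· + 1) hr
    · obtain ⟨rfl, hu⟩ := hu
      have : c (.inr ⟨j, u⟩) + 1 = n + 1 + (cs j).level u := h u hu
      show c (.inr ⟨j, u⟩) + 1 = n + ((cs j).level u + 1)
      omega

def childIndex : (node ι cs g).NodeType ⊕ (node ι cs g).Branch → Option ι
  | .inl (.inl _) => none
  | .inl (.inr ⟨i, _⟩) => some i
  | .inr ⟨i, _⟩ => some i

variable {t : STree}

open Classical in
noncomputable def childPart
    (w : (node ι (fun _ => t) g).NodeType ⊕ (node ι (fun _ => t) g).Branch) (i : ι) :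
    t.NodeType ⊕ t.Branch :=
  match w with
  | .inl (.inl _) => .inl t.root
  | .inl (.inr ⟨j, u⟩) => if j = i then .inl u else .inl t.root
  | .inr ⟨j, b⟩ => if j = i then .inr b else .inl t.root

lemma eq_of_childPart_eq_inl {w : (node ι (fun _ => t) g).NodeType ⊕ (node ι (fun _ => t) g).Branch}
    {i : ι} {u : t.NodeType} (h : childPart w i = .inl u) (hu : u ≠ t.root) :
    w = .inl (.inr ⟨i, u⟩) := by
  rcases w with (_ | ⟨j, v⟩) | ⟨j, b⟩
  · exact absurd (Sum.inl_injective h).symm hu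
  · simp only [childPart] at h
    split_ifs at h with hj
    · cases hj; cases h; rfl
    · exact absurd (Sum.inl_injective h).symm hu
  · simp only [childPart] at h
    split_ifs at h
    exact absurd (Sum.inl_injective h).symm hu

section MarkedNode

variable {n T r : ℕ} {w : (node ι (fun _ => t) g).NodeType ⊕ (node ι (fun _ => t) g).Branch}
  {c₀ : ι → ℕ} {f : ι → t.NodeType → ℕ}

open Classical in
/-- The child holding the target, if any, is the only child that may get the top colour `n + 1`
of its sibling group, so a staircase can only continue through it. -/
lemma staircase_nodeColoring (hT : n + 1 < T)
    (hc₀top : ∀ j ∈ childIndex w, ∀ i, c₀ i = n + 1 → i = j)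
    (hfroot : ∀ i, f i t.root = if w = .inl (.inr ⟨i, t.root⟩) then T else c₀ i)
    (hf : ∀ i, IsMarkedColoring t (n + 1) T (childPart w i) (f i))
    (b : (node ι (fun _ => t) g).Branch) (hb : IsStaircase _ (nodeColoring r f) n b) :
    .inr b = w ∨ w = .inl (node ι (fun _ => t) g).root := by
  obtain ⟨i, b⟩ := b
  obtain ⟨-, hb⟩ := (isStaircase_node_iff (cs := fun _ => t) (nodeColoring r f) n i b).mp hb
  have hfi : f i t.root = n + 1 := by
    have := hb _ (onBranch_root _ b)
    rw [level_root] at this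
    exact Nat.add_right_cancel this
  rw [hfroot] at hfi
  split_ifs at hfi with hwi
  · omega
  have hchild := (hf i).staircase b hb
  rcases w with (_ | ⟨j, u⟩) | ⟨j, b'⟩
  · exact .inr rfl
  · obtain rfl := hc₀top j rfl i hfi
    simp only [childPart, ↓reduceIte, reduceCtorEq, false_or, Sum.inl.injEq] at hchild
    subst hchild
    exact absurd rfl hwi
  · obtain rfl := hc₀top j rfl i hfi
    simp only [childPart, ↓reduceIte, Sum.inr.injEq, reduceCtorEq, or_false] at hchild
    subst hchild
    exact .inl rfl

open Classical in
lemma isMarkedColoring_nodeColoring (hT : n + 1 < T)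
    (hc₀ : ∀ i j, g.Adj i j → c₀ i ≠ c₀ j) (hc₀le : ∀ i, c₀ i ≤ n + 1)
    (hc₀top : ∀ j ∈ childIndex w, ∀ i, c₀ i = n + 1 → i = j)
    (hfroot : ∀ i, f i t.root = if w = .inl (.inr ⟨i, t.root⟩) then T else c₀ i)
    (hf : ∀ i, IsMarkedColoring t (n + 1) T (childPart w i) (f i)) :
    IsMarkedColoring (node ι (fun _ => t) g) n T w (nodeColoring r f) := by
  refine ⟨isProperColoring_nodeColoring (fun i => (hf i).isProper) fun i j hij => ?_, ?_, ?_,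
    staircase_nodeColoring hT hc₀top hfroot hf⟩
  · rw [hfroot, hfroot]
    split_ifs with hi hj
    · exact absurd (hi.symm.trans hj) fun h => by cases h; exact hij.ne rfl
    · have := hc₀le j; omega
    · have := hc₀le i; omega
    · exact hc₀ i j hij
  · rintro (_ | ⟨i, u⟩) hu hw
    · exact absurd rfl hu
    · show f i u < n + (t.level u + 1)
      by_cases hroot : u = t.root
      · subst hroot
        rw [hfroot, level_root]
        split_ifs with h
        · exact absurd h.symm hw
        · have := hc₀le i
          omega
      · have := (hf i).lt u hroot fun h => hw (eq_of_childPart_eq_inl h.symm hroot).symm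
        omega
  · rintro (_ | ⟨i, u⟩) hu hw
    · exact absurd rfl hu
    · show f i u = T
      by_cases hroot : u = t.root
      · subst hroot
        rw [hfroot]
        split_ifs with h
        · rfl
        · exact absurd hw.symm h
      · exact (hf i).eq_top u hroot (by rw [← hw]; simp [childPart])

end MarkedNode

end Node

end STree

open STree

lemma level_buildTree_le (L : List (Σ V : Type, SimpleGraph V)) (u : (buildTree L).NodeType) :
    (buildTree L).level u ≤ L.length + 1 := by
  induction L with
  | nil => exact le_rfl
  | cons G L ih =>
    obtain ⟨ι, g⟩ := G
    rcases u with _ | ⟨i, u⟩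
    · exact Nat.le_add_left 1 _
    · exact Nat.succ_le_succ (ih u)

theorem exists_missing_color (L : List (Σ V : Type, SimpleGraph V)) (n : ℕ)
    (c : (buildTree L).NodeType → ℕ)
    (hc : ∀ u, c u < n + (buildTree L).level u ∨ n + L.length < c u)
    (b : (buildTree L).Branch) (hb : ¬ IsStaircase (buildTree L) c n b) :
    ∃ x, n ≤ x ∧ x ≤ n + L.length ∧ ∀ u, (buildTree L).onBranch b u → c u ≠ x := by
  induction L generalizing n with
  | nil =>
    refine ⟨n, le_rfl, Nat.le_add_right n 0, fun u _ hu => hb fun u' _ => ?_⟩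
    cases u; cases u'
    exact congrArg (· + 1) hu
  | cons G L ih =>
    obtain ⟨ι, g⟩ := G
    obtain ⟨i, b⟩ := b
    let c' : (buildTree L).NodeType → ℕ := fun u => c (.inr ⟨i, u⟩)
    have hb' := (isStaircase_node_iff (cs := fun _ => buildTree L) (g := g) c n i b).not.mp hb
    by_cases hs : IsStaircase (buildTree L) c' (n + 1) b
    · refine ⟨n, le_rfl, Nat.le_add_right _ _, ?_⟩
      rintro (_ | ⟨j, u⟩) hu
      · exact fun hr => hb' ⟨hr, hs⟩
      · obtain ⟨rfl, hu⟩ := hu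
        have := hs u hu
        have := level_pos _ u
        exact fun h => by simp only [c'] at *; omega
    · have hc' : ∀ u, c' u < n + 1 + (buildTree L).level u ∨ n + 1 + L.length < c' u := by
        intro u
        have : c' u < n + ((buildTree L).level u + 1) ∨ n + (L.length + 1) < c' u :=
          hc (.inr ⟨i, u⟩)
        omega
      obtain ⟨x, hnx, hxn, hx⟩ := ih (n + 1) c' hc' b hs
      refine ⟨x, by omega, by simp only [List.length_cons]; omega, ?_⟩
      rintro (_ | ⟨j, u⟩) hu
      · show c (.inl PUnit.unit) ≠ x
        have : c (.inl PUnit.unit) < n + 1 ∨ n + (L.length + 1) < c (.inl PUnit.unit) :=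
          hc (.inl PUnit.unit)
        omega
      · obtain ⟨rfl, hu⟩ := hu
        exact hx u hu

theorem exists_isMarkedColoring (L : List (Σ V : Type, SimpleGraph V)) (n T : ℕ)
    (hL : UniqueTopColorableFrom n L) (hT : n + L.length < T) (r : ℕ)
    (w : (buildTree L).NodeType ⊕ (buildTree L).Branch) :
    ∃ c, c (buildTree L).root = r ∧ IsMarkedColoring (buildTree L) n T w c := by
  induction L generalizing n r with
  | nil =>
    refine ⟨fun _ => r, rfl, fun _ _ h => h.elim, fun u hu => absurd rfl hu,
      fun u hu => absurd rfl hu, fun b _ => ?_⟩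
    rcases w with ⟨⟩ | ⟨⟩
    · exact .inr rfl
    · exact .inl rfl
  | cons G L ih =>
    obtain ⟨ι, g⟩ := G
    classical
    have hT' : n + 1 + L.length < T := by simp only [List.length_cons] at hT; omega
    obtain ⟨c₀, hc₀, hc₀le, hc₀top⟩ := hL.head.exists_coloring (childIndex w)
    have hchild (i : ι) : ∃ c, c (buildTree L).root =
        (if w = .inl (.inr ⟨i, (buildTree L).root⟩) then T else c₀ i) ∧
        IsMarkedColoring (buildTree L) (n + 1) T (childPart w i) c :=
      ih (n + 1) hL.tail hT' _ _
    choose f hfroot hf using hchild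
    exact ⟨nodeColoring r f, rfl,
      isMarkedColoring_nodeColoring (by omega) hc₀ hc₀le hc₀top hfroot hf⟩

theorem isUniqueTopColorable_realization (L : List (Σ V : Type, SimpleGraph V))
    (hL : UniqueTopColorableFrom 0 L) :
    IsUniqueTopColorable (buildTree L).realization (L.length + 1) := by
  classical
  intro v
  obtain ⟨c, hroot, hc⟩ := exists_isMarkedColoring L 0 (L.length + 1) hL (by omega)
    (if v = .inl (buildTree L).root then L.length + 1 else 0) v
  have htop (u) (hu : .inl u = v) : c u = L.length + 1 := by
    by_cases h : u = (buildTree L).root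
    · subst h; rw [hroot, if_pos hu.symm]
    · exact hc.eq_top u h hu
  have hlevel (u) (hu : .inl u ≠ v) : c u < (buildTree L).level u := by
    by_cases h : u = (buildTree L).root
    · subst h; rw [hroot, if_neg hu.symm, level_root]; exact Nat.one_pos
    · simpa using hc.lt u h hu
  have hlt (u) (hu : .inl u ≠ v) : c u < L.length + 1 :=
    lt_of_lt_of_le (hlevel u hu) (level_buildTree_le L u)
  have hfree (b) (hb : .inr b ≠ v) :
      ∃ x ≤ L.length, ∀ u, (buildTree L).onBranch b u → c u ≠ x := by
    have hbound (u) : c u < 0 + (buildTree L).level u ∨ 0 + L.length < c u := by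
      by_cases hu : .inl u = v
      · exact .inr (by rw [htop u hu]; omega)
      · exact .inl (by simpa using hlevel u hu)
    have hs : ¬ IsStaircase (buildTree L) c 0 b := fun hs => by
      rcases hc.staircase b hs with h | h
      · exact hb h
      · have := hs _ (onBranch_root _ b)
        rw [htop _ h.symm, level_root] at this
        omega
    obtain ⟨x, -, hx, hxb⟩ := exists_missing_color L 0 c hbound b hs
    exact ⟨x, by omega, hxb⟩
  choose x hxle hx using hfree
  refine ⟨Sum.elim c fun b => if hb : .inr b = v then L.length + 1 else x b hb,
    ne_of_realization_adj hc.isProper fun b u hu => ?_, ?_, ?_⟩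
  · show c u ≠ dite _ _ _
    split_ifs with hb
    · exact (hlt u (by rw [← hb]; exact Sum.inl_ne_inr)).ne
    · exact hx b hb u hu
  · rcases v with u | b
    · exact htop u rfl
    · exact dif_pos rfl
  · rintro (u | b) huv
    · exact hlt u huv
    · show dite _ _ _ < _
      rw [dif_neg huv]
      exact Nat.lt_succ_of_le (hxle b huv)

lemma twincutList_length (m : ℕ) : (twincutList m).length = m := by
  induction m with
  | zero => rfl
  | succ m ih => simp [twincutList, ih]

lemma twincutList_getElem (m j : ℕ) (hj : j < (twincutList m).length) :
    (twincutList m)[j] = twincutG (j + 2) := by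
  induction m with
  | zero => simp [twincutList] at hj
  | succ m ih =>
    rcases lt_or_eq_of_le (Nat.le_of_lt_succ (twincutList_length (m + 1) ▸ hj)) with h | rfl
    · rw [← twincutList_length m] at h
      simp only [twincutList, List.getElem_append_left h, ih h]
    · simp only [twincutList, List.getElem_concat_length (twincutList_length j).symm, twincutG,
        twincutTree]

theorem isUniqueTopColorable_twincutG (k : ℕ) (hk : 1 ≤ k) :
    IsUniqueTopColorable (twincutG k).2 (k - 1) := by
  induction k using Nat.strong_induction_on with
  | _ k ih =>
  match k, hk with
  | 1, _ => exact fun v => ⟨fun _ => 0, fun _ _ h => h.elim, rfl, fun u hu => absurd rfl hu⟩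
  | m + 2, _ =>
    have hL : UniqueTopColorableFrom 0 (twincutList m) := fun j hj => by
      rw [twincutList_getElem]
      have := twincutList_length m ▸ hj
      simpa [add_comm] using ih (j + 2) (by omega) (by omega)
    have := isUniqueTopColorable_realization _ hL
    rw [twincutList_length] at this
    exact this

/-- for every vertex `v` of `G_k` there is a proper `k`-coloring
of `G_k` in which `v` is the unique vertex with the last color. -/
theorem twincut_coloring_unique_color (k : ℕ) (hk : 1 ≤ k) (v : (twincutG k).1) :
    ∃ c : (twincutG k).1 → Fin k,
      (∀ a b, (twincutG k).2.Adj a b → c a ≠ c b) ∧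
      c v = ⟨k - 1, by omega⟩ ∧
      (∀ u, c u = ⟨k - 1, by omega⟩ → u = v) := by
  obtain ⟨c, hc, hv, hlt⟩ := isUniqueTopColorable_twincutG k hk v
  have hle (u) : c u ≤ k - 1 := by
    by_cases h : u = v
    · rw [h, hv]
    · exact (hlt u h).le
  refine ⟨fun u => ⟨c u, by have := hle u; omega⟩, fun a b h e => hc a b h (congrArg Fin.val e),
    Fin.ext hv, fun u hu => by_contra fun h => (hlt u h).ne (congrArg Fin.val hu)⟩
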